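/- Let Q ⊆ ℝ^m be a nonempty closed convex set and let λ̄ ∈ Q. Then there exists a closed cone S ⊆ ℝ^m such that for every w ∈ ℝ^m the strict second subderivative satisfies d²_s σ_Q(0|λ̄)(w) = 0 if w ∈ S and d²_s σ_Q(0|λ̄)(w) = +∞ if w ∉ S; in particular, d²_s σ_Q(0|λ̄) takes no values other than 0 and +∞. -/
import Mathlib


open Filter Topology Set
open scoped InnerProductSpace

noncomputable section

/-- Support function of `Q ⊆ ℝ^m`, with values in the extended reals. -/
def supportFn {m : ℕ} (Q : Set (EuclideanSpace ℝ (Fin m))) (x : EuclideanSpace ℝ (Fin m)) :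
    EReal :=
  ⨆ z ∈ Q, ((⟪z, x⟫_ℝ : ℝ) : EReal)

/-- The normal cone of a convex set `Q ⊆ ℝ^m` at a point `lam ∈ Q`. -/
def normalCone {m : ℕ} (Q : Set (EuclideanSpace ℝ (Fin m))) (lam : EuclideanSpace ℝ (Fin m)) :
    Set (EuclideanSpace ℝ (Fin m)) :=
  {v | ∀ y ∈ Q, ⟪v, y - lam⟫_ℝ ≤ 0}

/-- Second-order difference quotient `Δ²_t f(x|v)(h)`. -/
def secondDQ {n : ℕ} (f : EuclideanSpace ℝ (Fin n) → EReal)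
    (x v : EuclideanSpace ℝ (Fin n)) (t : ℝ) (h : EuclideanSpace ℝ (Fin n)) : EReal :=
  ((2 / t ^ 2 : ℝ) : EReal) * (f (x + t • h) - f x - ((t * ⟪v, h⟫_ℝ : ℝ) : EReal))

/-- Strict second subderivative of the support function `σ_Q` at `0` for `lam0` in direction `w`:
the liminf of `Δ²_t σ_Q(x|λ)(w̃)` over `t ↓ 0`, `w̃ → w`, `x → 0`, `Q ∋ λ → lam0` subject to
`σ_Q(x) = ⟨λ, x⟩`. -/
def strictD2supp {m : ℕ} (Q : Set (EuclideanSpace ℝ (Fin m))) (lam0 : EuclideanSpace ℝ (Fin m))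
    (w : EuclideanSpace ℝ (Fin m)) : EReal :=
  liminf
    (fun p : ℝ × EuclideanSpace ℝ (Fin m) × EuclideanSpace ℝ (Fin m) × EuclideanSpace ℝ (Fin m) =>
      secondDQ (supportFn Q) p.2.2.1 p.2.2.2 p.1 p.2.1)
    (((𝓝[>] (0 : ℝ)) ×ˢ (𝓝 w ×ˢ (𝓝 (0 : EuclideanSpace ℝ (Fin m)) ×ˢ 𝓝 lam0))) ⊓
      Filter.principal
        {p : ℝ × EuclideanSpace ℝ (Fin m) × EuclideanSpace ℝ (Fin m) × EuclideanSpace ℝ (Fin m) |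
          p.2.2.2 ∈ Q ∧ supportFn Q p.2.2.1 = ((⟪p.2.2.2, p.2.2.1⟫_ℝ : ℝ) : EReal)})

/-- Strict second subderivative of `φ = σ_Q ∘ F` at `xbar` for `vbar` in direction `h`:
the liminf of `Δ²_t φ(x|v)(h̃)` over `t ↓ 0`, `h̃ → h`, `x → xbar`, `v → vbar` subject to
`v = DF(x)ᵀ λ` for some `λ ∈ Q` with `σ_Q(F x) = ⟨λ, F x⟩`. -/
def strictD2phi {n m : ℕ} (Q : Set (EuclideanSpace ℝ (Fin m)))
    (F : EuclideanSpace ℝ (Fin n) → EuclideanSpace ℝ (Fin m))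
    (F' : EuclideanSpace ℝ (Fin n) → (EuclideanSpace ℝ (Fin n) →L[ℝ] EuclideanSpace ℝ (Fin m)))
    (xbar vbar h : EuclideanSpace ℝ (Fin n)) : EReal :=
  liminf
    (fun p : ℝ × EuclideanSpace ℝ (Fin n) × EuclideanSpace ℝ (Fin n) × EuclideanSpace ℝ (Fin n) =>
      secondDQ (fun x => supportFn Q (F x)) p.2.2.1 p.2.2.2 p.1 p.2.1)
    (((𝓝[>] (0 : ℝ)) ×ˢ (𝓝 h ×ˢ (𝓝 xbar ×ˢ 𝓝 vbar))) ⊓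
      Filter.principal
        {p : ℝ × EuclideanSpace ℝ (Fin n) × EuclideanSpace ℝ (Fin n) × EuclideanSpace ℝ (Fin n) |
          ∃ lam ∈ Q, p.2.2.2 = ContinuousLinearMap.adjoint (F' p.2.2.1) lam ∧
            supportFn Q (F p.2.2.1) = ((⟪lam, F p.2.2.1⟫_ℝ : ℝ) : EReal)})

namespace Stmt11Aux

variable {m : ℕ}

local notation "E" => EuclideanSpace ℝ (Fin m)

lemma le_supportFn {Q : Set E} {z : E} (hz : z ∈ Q) (x : E) :
    ((⟪z, x⟫_ℝ : ℝ) : EReal) ≤ supportFn Q x := by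
  unfold supportFn
  exact le_biSup (fun z => ((⟪z, x⟫_ℝ : ℝ) : EReal)) hz

lemma supportFn_ne_bot {Q : Set E} (hQ : Q.Nonempty) (x : E) : supportFn Q x ≠ ⊥ := by
  obtain ⟨z, hz⟩ := hQ
  intro h
  exact absurd (h ▸ le_supportFn hz x) (EReal.bot_lt_coe _).not_ge

lemma supportFn_zero {Q : Set E} (hQ : Q.Nonempty) : supportFn Q (0 : E) = 0 := by
  unfold supportFn
  simp only [inner_zero_right, EReal.coe_zero]
  exact biSup_const hQ

lemma ereal_mul_le_mul_left {a b : EReal} {s : ℝ} (hs : 0 ≤ s) (h : a ≤ b) :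
    (s : EReal) * a ≤ (s : EReal) * b :=
  mul_le_mul_of_nonneg_left h (by exact_mod_cast hs)

lemma ereal_mul_iSup {ι : Sort*} (g : ι → EReal) {s : ℝ} (hs : 0 < s) :
    (s : EReal) * ⨆ i, g i = ⨆ i, (s : EReal) * g i := by
  apply le_antisymm
  · have h1 : ∀ i, g i ≤ ((s⁻¹ : ℝ) : EReal) * ⨆ j, (s : EReal) * g j := by
      intro i
      have h2 : g i = ((s⁻¹ : ℝ) : EReal) * ((s : EReal) * g i) := by
        rw [← mul_assoc, ← EReal.coe_mul, inv_mul_cancel₀ hs.ne', EReal.coe_one, one_mul]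
      rw [h2]
      exact ereal_mul_le_mul_left (by positivity) (le_iSup (fun j => (s : EReal) * g j) i)
    calc (s : EReal) * ⨆ i, g i
        ≤ (s : EReal) * (((s⁻¹ : ℝ) : EReal) * ⨆ j, (s : EReal) * g j) :=
          ereal_mul_le_mul_left hs.le (iSup_le h1)
      _ = ⨆ j, (s : EReal) * g j := by
          rw [← mul_assoc, ← EReal.coe_mul, mul_inv_cancel₀ hs.ne', EReal.coe_one, one_mul]
  · exact iSup_le fun i => ereal_mul_le_mul_left hs.le (le_iSup _ i)

lemma supportFn_smul {Q : Set E} {s : ℝ} (hs : 0 < s) (x : E) :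
    supportFn Q (s • x) = (s : EReal) * supportFn Q x := by
  unfold supportFn
  rw [ereal_mul_iSup _ hs]
  refine iSup_congr fun z => ?_
  rw [ereal_mul_iSup _ hs]
  refine iSup_congr fun hz => ?_
  rw [real_inner_smul_right, EReal.coe_mul]

def fdq (Q : Set E) : ℝ × E × E × E → EReal :=
  fun p => secondDQ (supportFn Q) p.2.2.1 p.2.2.2 p.1 p.2.1

def Cset (Q : Set E) : Set (ℝ × E × E × E) :=
  {p | p.2.2.2 ∈ Q ∧ supportFn Q p.2.2.1 = ((⟪p.2.2.2, p.2.2.1⟫_ℝ : ℝ) : EReal)}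

def Lfil (Q : Set E) (lambar w : E) : Filter (ℝ × E × E × E) :=
  ((𝓝[>] (0 : ℝ)) ×ˢ (𝓝 w ×ˢ (𝓝 (0 : E) ×ˢ 𝓝 lambar))) ⊓ 𝓟 (Cset Q)

lemma strictD2supp_eq (Q : Set E) (lambar w : E) :
    strictD2supp Q lambar w = liminf (fdq Q) (Lfil Q lambar w) := rfl

lemma fdq_def (Q : Set E) (t : ℝ) (w x lam : E) :
    fdq Q (t, w, x, lam) =
      ((2 / t ^ 2 : ℝ) : EReal) *
        (supportFn Q (x + t • w) - supportFn Q x - ((t * ⟪lam, w⟫_ℝ : ℝ) : EReal)) := rfl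

lemma eventually_mem (Q : Set E) (lambar w : E) :
    ∀ᶠ p in Lfil Q lambar w, p ∈ Cset Q ∧ 0 < p.1 := by
  have h1 : ∀ᶠ p in Lfil Q lambar w, p ∈ Cset Q :=
    Eventually.filter_mono inf_le_right (eventually_principal.2 fun _ h => h)
  have h0 : ∀ᶠ t in 𝓝[>] (0 : ℝ), 0 < t := eventually_mem_nhdsWithin
  have h2 : ∀ᶠ p in Lfil Q lambar w, 0 < p.1 :=
    Eventually.filter_mono inf_le_left (h0.prod_inl _)
  exact h1.and h2

lemma fdq_nonneg {Q : Set E} {p : ℝ × E × E × E} (hp : p ∈ Cset Q) (ht : 0 < p.1) :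
    0 ≤ fdq Q p := by
  obtain ⟨t, w, x, lam⟩ := p
  obtain ⟨hlam, hx⟩ := hp
  have ht : (0 : ℝ) < t := ht
  have hA : ((⟪lam, x + t • w⟫_ℝ : ℝ) : EReal) ≤ supportFn Q (x + t • w) := le_supportFn hlam _
  have hinner : ⟪lam, x + t • w⟫_ℝ = ⟪lam, x⟫_ℝ + t * ⟪lam, w⟫_ℝ := by
    rw [inner_add_right, real_inner_smul_right]
  have hB : (0 : EReal) ≤
      supportFn Q (x + t • w) - supportFn Q x - ((t * ⟪lam, w⟫_ℝ : ℝ) : EReal) := by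
    rw [hx]
    calc (0 : EReal)
        = ((⟪lam, x + t • w⟫_ℝ : ℝ) : EReal) - ((⟪lam, x⟫_ℝ : ℝ) : EReal)
            - ((t * ⟪lam, w⟫_ℝ : ℝ) : EReal) := by
          rw [← EReal.coe_sub, ← EReal.coe_sub, hinner]; norm_num
      _ ≤ _ := EReal.sub_le_sub (EReal.sub_le_sub hA le_rfl) le_rfl
  have hc : (0 : EReal) ≤ ((2 / t ^ 2 : ℝ) : EReal) := by
    exact_mod_cast (by positivity : (0:ℝ) ≤ 2 / t ^ 2)
  exact mul_nonneg hc hB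

lemma fdq_scale_t {Q : Set E} (hQ : Q.Nonempty) {t : ℝ} {w x lam : E}
    (hp : (t, w, x, lam) ∈ Cset Q) (ht : 0 < t) {s : ℝ} (hs : 0 < s) :
    fdq Q (s * t, w, s • x, lam) = ((s⁻¹ : ℝ) : EReal) * fdq Q (t, w, x, lam) := by
  have hx : supportFn Q x = ((⟪lam, x⟫_ℝ : ℝ) : EReal) := hp.2
  have h1 : s • x + (s * t) • w = s • (x + t • w) := by
    rw [smul_add, smul_smul]
  rw [fdq_def, fdq_def, h1, supportFn_smul hs, supportFn_smul hs, hx]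
  set A := supportFn Q (x + t • w) with hA
  have hAbot : A ≠ ⊥ := supportFn_ne_bot hQ _
  have hts : (0 : ℝ) < 2 / (s * t) ^ 2 := by positivity
  have htt : (0 : ℝ) < 2 / t ^ 2 := by positivity
  rcases eq_or_ne A ⊤ with hAt | hAt
  · rw [hAt, ← EReal.coe_mul s, EReal.mul_top_of_pos (by exact_mod_cast hs),
      EReal.top_sub_coe, EReal.top_sub_coe, EReal.top_sub_coe, EReal.top_sub_coe,
      EReal.mul_top_of_pos (by exact_mod_cast hts),
      EReal.mul_top_of_pos (by exact_mod_cast htt),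
      EReal.mul_top_of_pos (by exact_mod_cast (inv_pos.2 hs))]
  · lift A to ℝ using ⟨hAt, hAbot⟩ with r
    norm_cast
    rw [mul_comm s t]
    field_simp

lemma fdq_scale_dir {Q : Set E} {t : ℝ} {w x lam : E} (ht : 0 < t) {c : ℝ} (hc : 0 < c) :
    fdq Q (t / c, c • w, x, lam) = ((c ^ 2 : ℝ) : EReal) * fdq Q (t, w, x, lam) := by
  have h1 : x + (t / c) • (c • w) = x + t • w := by
    rw [smul_smul, div_mul_cancel₀ _ hc.ne']
  have h2 : (t / c) * ⟪lam, c • w⟫_ℝ = t * ⟪lam, w⟫_ℝ := by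
    rw [real_inner_smul_right]
    field_simp
  rw [fdq_def, fdq_def, h1, h2, ← mul_assoc, ← EReal.coe_mul]
  congr 2
  rw [div_pow]
  field_simp

lemma tendsto_mul_pos_nhdsGT {s : ℝ} (hs : 0 < s) :
    Tendsto (fun t : ℝ => s * t) (𝓝[>] 0) (𝓝[>] 0) := by
  rw [tendsto_nhdsWithin_iff]
  constructor
  · have h : Tendsto (fun t : ℝ => s * t) (𝓝 0) (𝓝 (s * 0)) :=
      (continuous_const.mul continuous_id).tendsto 0
    rw [mul_zero] at h
    exact h.mono_left nhdsWithin_le_nhds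
  · exact eventually_mem_nhdsWithin.mono fun t ht => mul_pos hs ht

lemma tendsto_smul_zero {s : ℝ} :
    Tendsto (fun x : E => s • x) (𝓝 (0 : E)) (𝓝 (0 : E)) := by
  have h : Tendsto (fun x : E => s • x) (𝓝 (0 : E)) (𝓝 (s • (0 : E))) :=
    (continuous_const_smul s).tendsto (0 : E)
  rwa [smul_zero] at h

lemma tendsto_phi_s {Q : Set E} (lambar w : E) {s : ℝ} (hs : 0 < s) :
    Tendsto (fun p : ℝ × E × E × E => (s * p.1, p.2.1, s • p.2.2.1, p.2.2.2))
      (Lfil Q lambar w) (Lfil Q lambar w) := by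
  refine tendsto_inf.2 ⟨?_, tendsto_principal.2 ?_⟩
  · refine Tendsto.mono_left ?_ inf_le_left
    exact ((tendsto_mul_pos_nhdsGT hs).comp tendsto_fst).prodMk
      ((tendsto_fst.comp tendsto_snd).prodMk
        (((tendsto_smul_zero (s := s)).comp
            (tendsto_fst.comp (tendsto_snd.comp tendsto_snd))).prodMk
          (tendsto_snd.comp (tendsto_snd.comp tendsto_snd))))
  · refine (eventually_mem Q lambar w).mono ?_
    rintro ⟨t, w', x, lam⟩ ⟨⟨hlam, hx⟩, ht⟩
    refine ⟨hlam, ?_⟩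
    show supportFn Q (s • x) = ((⟪lam, s • x⟫_ℝ : ℝ) : EReal)
    rw [supportFn_smul hs, hx, real_inner_smul_right, EReal.coe_mul]

lemma tendsto_phi_dir {Q : Set E} (lambar w : E) {c : ℝ} (hc : 0 < c) :
    Tendsto (fun p : ℝ × E × E × E => (p.1 / c, c • p.2.1, p.2.2.1, p.2.2.2))
      (Lfil Q lambar w) (Lfil Q lambar (c • w)) := by
  refine tendsto_inf.2 ⟨?_, tendsto_principal.2 ?_⟩
  · refine Tendsto.mono_left ?_ inf_le_left
    have hdiv : Tendsto (fun t : ℝ => t / c) (𝓝[>] 0) (𝓝[>] 0) := by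
      have := tendsto_mul_pos_nhdsGT (inv_pos.2 hc)
      simpa [div_eq_inv_mul] using this
    have hsm : Tendsto (fun y : E => c • y) (𝓝 w) (𝓝 (c • w)) :=
      (continuous_const_smul c).tendsto w
    exact (hdiv.comp tendsto_fst).prodMk
      ((hsm.comp (tendsto_fst.comp tendsto_snd)).prodMk
        ((tendsto_fst.comp (tendsto_snd.comp tendsto_snd)).prodMk
          (tendsto_snd.comp (tendsto_snd.comp tendsto_snd))))
  · refine (eventually_mem Q lambar w).mono ?_
    rintro ⟨t, w', x, lam⟩ ⟨⟨hlam, hx⟩, ht⟩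
    exact ⟨hlam, hx⟩

lemma liminf_nonneg {Q : Set E} (lambar w : E) :
    (0 : EReal) ≤ strictD2supp Q lambar w := by
  rw [strictD2supp_eq]
  exact le_liminf_of_le (by isBoundedDefault)
    ((eventually_mem Q lambar w).mono fun p hp => fdq_nonneg hp.1 hp.2)

lemma le_zero_of_forall_le_eps {x : EReal} (h : ∀ ε : ℝ, 0 < ε → x ≤ (ε : EReal)) :
    x ≤ 0 := by
  by_contra hx
  rw [not_le] at hx
  obtain ⟨y, hy1, hy2⟩ := EReal.exists_between_coe_real hx
  have h0 : (0 : ℝ) < y := by exact_mod_cast hy1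
  exact absurd (h y h0) (not_le.2 hy2)

lemma frequently_lt_of_liminf_lt'' {Q : Set E} {lambar w : E} {b : EReal}
    (h : liminf (fdq Q) (Lfil Q lambar w) < b) :
    ∃ᶠ p in Lfil Q lambar w, fdq Q p < b := by
  by_contra hcon
  rw [not_frequently] at hcon
  have hb : b ≤ liminf (fdq Q) (Lfil Q lambar w) :=
    le_liminf_of_le (by isBoundedDefault) (hcon.mono fun p hp => not_lt.1 hp)
  exact absurd h (not_lt.2 hb)

lemma liminf_le_eps {Q : Set E} (hQ : Q.Nonempty) (lambar w : E)
    (hfin : strictD2supp Q lambar w ≠ ⊤) {ε : ℝ} (hε : 0 < ε) :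
    strictD2supp Q lambar w ≤ (ε : EReal) := by
  rw [strictD2supp_eq] at hfin ⊢
  obtain ⟨M, hM1, hM2⟩ : ∃ M : ℝ, 0 < M ∧ liminf (fdq Q) (Lfil Q lambar w) < (M : EReal) := by
    obtain ⟨y, hy1, _⟩ := EReal.exists_between_coe_real (lt_top_iff_ne_top.2 hfin)
    exact ⟨max y 1, lt_of_lt_of_le one_pos (le_max_right y 1),
      hy1.trans_le (by exact_mod_cast le_max_left y 1)⟩
  have hfreq := frequently_lt_of_liminf_lt'' hM2
  set s := M / ε with hs_def
  have hs : 0 < s := div_pos hM1 hε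
  have key : ∃ᶠ p in Lfil Q lambar w,
      fdq Q (s * p.1, p.2.1, s • p.2.2.1, p.2.2.2) ≤ (ε : EReal) := by
    refine (hfreq.and_eventually (eventually_mem Q lambar w)).mono ?_
    rintro ⟨t, w', x, lam⟩ ⟨hlt, hmem, ht⟩
    dsimp only
    rw [fdq_scale_t hQ hmem ht hs]
    calc ((s⁻¹ : ℝ) : EReal) * fdq Q (t, w', x, lam)
        ≤ ((s⁻¹ : ℝ) : EReal) * (M : EReal) :=
          ereal_mul_le_mul_left (inv_nonneg.2 hs.le) hlt.le
      _ = (ε : EReal) := by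
          rw [← EReal.coe_mul]
          norm_cast
          rw [hs_def]
          field_simp
  have hmap : ∃ᶠ q in Lfil Q lambar w, fdq Q q ≤ (ε : EReal) :=
    (frequently_map.2 key).filter_mono (tendsto_phi_s lambar w hs)
  exact liminf_le_of_frequently_le' hmap

lemma liminf_scale_dir {Q : Set E} (hQ : Q.Nonempty) (lambar w : E)
    (hw : strictD2supp Q lambar w ≤ 0) {c : ℝ} (hc : 0 < c) :
    strictD2supp Q lambar (c • w) ≤ 0 := by
  apply le_zero_of_forall_le_eps
  intro ε hε
  rw [strictD2supp_eq] at hw ⊢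
  set ε' := ε / c ^ 2 with hε'def
  have hε' : (0 : ℝ) < ε' := div_pos hε (by positivity)
  have hfreq : ∃ᶠ p in Lfil Q lambar w, fdq Q p < ((ε' : ℝ) : EReal) :=
    frequently_lt_of_liminf_lt'' (lt_of_le_of_lt hw (by exact_mod_cast hε'))
  have key : ∃ᶠ p in Lfil Q lambar w,
      fdq Q (p.1 / c, c • p.2.1, p.2.2.1, p.2.2.2) ≤ (ε : EReal) := by
    refine (hfreq.and_eventually (eventually_mem Q lambar w)).mono ?_
    rintro ⟨t, w', x, lam⟩ ⟨hlt, hmem, ht⟩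
    dsimp only
    rw [fdq_scale_dir ht hc]
    calc ((c ^ 2 : ℝ) : EReal) * fdq Q (t, w', x, lam)
        ≤ ((c ^ 2 : ℝ) : EReal) * ((ε' : ℝ) : EReal) :=
          ereal_mul_le_mul_left (by positivity) hlt.le
      _ = (ε : EReal) := by
          rw [← EReal.coe_mul]
          norm_cast
          rw [hε'def]
          field_simp
  have hmap : ∃ᶠ q in Lfil Q lambar (c • w), fdq Q q ≤ (ε : EReal) :=
    (frequently_map.2 key).filter_mono (tendsto_phi_dir lambar w hc)
  exact liminf_le_of_frequently_le' hmap

lemma liminf_at_zero {Q : Set E} (hQ : Q.Nonempty) {lambar : E} (hl : lambar ∈ Q) :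
    strictD2supp Q lambar (0 : E) ≤ 0 := by
  rw [strictD2supp_eq]
  have hsel : Tendsto (fun t : ℝ => (t, (0 : E), (0 : E), lambar)) (𝓝[>] (0 : ℝ))
      (Lfil Q lambar 0) := by
    refine tendsto_inf.2 ⟨?_, tendsto_principal.2 ?_⟩
    · exact tendsto_id.prodMk (tendsto_const_nhds.prodMk
        (tendsto_const_nhds.prodMk tendsto_const_nhds))
    · refine Eventually.of_forall fun t => ⟨hl, ?_⟩
      show supportFn Q (0 : E) = ((⟪lambar, (0 : E)⟫_ℝ : ℝ) : EReal)
      rw [supportFn_zero hQ, inner_zero_right]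
      norm_num
  have hval : ∀ t : ℝ, fdq Q (t, (0 : E), (0 : E), lambar) = 0 := by
    intro t
    rw [fdq_def, smul_zero, add_zero, supportFn_zero hQ, inner_zero_right, mul_zero]
    simp
  have hfreq : ∃ᶠ q in Lfil Q lambar (0 : E), fdq Q q ≤ 0 := by
    have hev : ∀ᶠ t in 𝓝[>] (0 : ℝ), fdq Q (t, (0 : E), (0 : E), lambar) ≤ 0 :=
      Eventually.of_forall fun t => le_of_eq (hval t)
    exact (frequently_map.2 hev.frequently).filter_mono hsel
  exact liminf_le_of_frequently_le' hfreq

lemma notMem_nhds {Q : Set E} (lambar : E) {w : E}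
    (hw : ¬ strictD2supp Q lambar w ≤ 0) :
    ∀ᶠ w' in 𝓝 w, ¬ strictD2supp Q lambar w' ≤ 0 := by
  rw [strictD2supp_eq, not_le] at hw
  obtain ⟨cc, hc1, hc2⟩ := EReal.exists_between_coe_real hw
  have hc0 : (0 : ℝ) < cc := by exact_mod_cast hc1
  have hE : ∀ᶠ p in Lfil Q lambar w, (cc : EReal) < fdq Q p :=
    eventually_lt_of_lt_liminf hc2 (by isBoundedDefault)
  rw [Lfil, eventually_inf_principal] at hE
  rw [Filter.eventually_iff, Filter.mem_prod_iff] at hE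
  obtain ⟨T, hT, R, hR, hTR⟩ := hE
  rw [Filter.mem_prod_iff] at hR
  obtain ⟨U, hU, R2, hR2, hUR⟩ := hR
  have hU' : interior U ∈ 𝓝 w := interior_mem_nhds.2 hU
  refine eventually_of_mem hU' fun w' hw' => ?_
  rw [strictD2supp_eq, not_le]
  have hUw' : U ∈ 𝓝 w' := mem_nhds_iff.2 ⟨interior U, interior_subset, isOpen_interior, hw'⟩
  have hE' : ∀ᶠ p in Lfil Q lambar w', (cc : EReal) < fdq Q p := by
    rw [Lfil, eventually_inf_principal]
    exact mem_of_superset (prod_mem_prod hT (prod_mem_prod hUw' hR2))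
      (fun p hp => hTR (Set.prod_mono_right hUR hp))
  have : (cc : EReal) ≤ liminf (fdq Q) (Lfil Q lambar w') :=
    le_liminf_of_le (by isBoundedDefault) (hE'.mono fun p hp => hp.le)
  exact lt_of_lt_of_le hc1 this

end Stmt11Aux

theorem stmt11 {m : ℕ} (Q : Set (EuclideanSpace ℝ (Fin m)))
    (hQne : Q.Nonempty) (hQc : IsClosed Q) (hQconv : Convex ℝ Q)
    (lambar : EuclideanSpace ℝ (Fin m)) (hlambar : lambar ∈ Q) :
    ∃ S : Set (EuclideanSpace ℝ (Fin m)), IsClosed S ∧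
      (∀ c : ℝ, 0 ≤ c → ∀ x ∈ S, c • x ∈ S) ∧
      ∀ w : EuclideanSpace ℝ (Fin m),
        (w ∈ S → strictD2supp Q lambar w = 0) ∧ (w ∉ S → strictD2supp Q lambar w = ⊤) := by
  refine ⟨{w | strictD2supp Q lambar w ≤ 0}, ?_, ?_, ?_⟩
  · rw [← isOpen_compl_iff, isOpen_iff_mem_nhds]
    intro w hw
    have hw' : ¬ strictD2supp Q lambar w ≤ 0 := hw
    have := Stmt11Aux.notMem_nhds lambar hw'
    exact this.mono fun w' h => h
  · intro c hc x hx
    have hx' : strictD2supp Q lambar x ≤ 0 := hx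
    rcases hc.eq_or_lt with h | h
    · show strictD2supp Q lambar (c • x) ≤ 0
      rw [← h, zero_smul]
      exact Stmt11Aux.liminf_at_zero hQne hlambar
    · exact Stmt11Aux.liminf_scale_dir hQne lambar x hx' h
  · intro w
    constructor
    · intro hw
      exact le_antisymm hw (Stmt11Aux.liminf_nonneg lambar w)
    · intro hw
      by_contra hne
      exact hw (Stmt11Aux.le_zero_of_forall_le_eps fun ε hε =>
        Stmt11Aux.liminf_le_eps hQne lambar w hne hε)

end
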